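/- Let ℓ, m ≥ 2 be fixed integers with max{ℓ, m} ≥ 3. The set of pairs (a, b) of positive odd integers with s(a) = ℓ, s(b) = m, and s(ab) = 3 is finite. -/
import Mathlib


/-- `s n` is the number of nonzero digits (ones) in the binary expansion of `n`. -/
def s (n : ℕ) : ℕ := (Nat.digits 2 n).count 1

set_option linter.unnecessarySeqFocus false
set_option linter.unusedVariables false

lemma s_zero : s 0 = 0 := by simp [s]
lemma s_one : s 1 = 1 := by simp [s]

lemma s_bits (n : ℕ) : s n = n % 2 + s (n / 2) := by
  rcases Nat.eq_zero_or_pos n with h | h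
  · subst h; simp [s]
  · unfold s
    rw [Nat.digits_def' (by norm_num : (1:ℕ) < 2) h, List.count_cons]
    have : n % 2 = 0 ∨ n % 2 = 1 := by omega
    rcases this with h2 | h2 <;> simp [h2] <;> omega

lemma s_even (n : ℕ) : s (2 * n) = s n := by
  rw [s_bits (2*n)]
  simp [Nat.mul_div_cancel_left, Nat.mul_mod_right]

lemma s_odd (n : ℕ) : s (2 * n + 1) = s n + 1 := by
  rw [s_bits (2*n+1)]
  have h1 : (2*n+1) % 2 = 1 := by omega
  have h2 : (2*n+1) / 2 = n := by omega
  rw [h1, h2]; omega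

lemma s_eq_zero (n : ℕ) : s n = 0 ↔ n = 0 := by
  constructor
  · intro h
    induction n using Nat.strong_induction_on with
    | _ n ih =>
      rcases Nat.eq_zero_or_pos n with h0 | h0
      · exact h0
      · rw [s_bits n] at h
        have h2 : n / 2 = 0 := ih (n/2) (by omega) (by omega)
        omega
  · intro h; subst h; exact s_zero

lemma s_pos (n : ℕ) (h : 0 < n) : 0 < s n := by
  have := (s_eq_zero n)
  omega

lemma s_pow_mul (k n : ℕ) : s (2^k * n) = s n := by
  induction k with
  | zero => simp
  | succ k ih =>
    have : 2^(k+1) * n = 2 * (2^k * n) := by ring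
    rw [this, s_even, ih]

lemma s_pow (k : ℕ) : s (2^k) = 1 := by
  have := s_pow_mul k 1
  rw [s_one] at this
  simpa using this

lemma s_split (k : ℕ) : ∀ x y : ℕ, x < 2^k → s (x + 2^k * y) = s x + s y := by
  induction k with
  | zero =>
    intro x y hx
    interval_cases x
    simp [s_zero]
  | succ k ih =>
    intro x y hx
    rw [s_bits (x + 2^(k+1) * y), s_bits x]
    have h1 : (x + 2^(k+1) * y) % 2 = x % 2 := by
      have : 2^(k+1) * y = 2 * (2^k * y) := by ring
      omega
    have h2 : (x + 2^(k+1) * y) / 2 = x / 2 + 2^k * y := by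
      have : 2^(k+1) * y = 2 * (2^k * y) := by ring
      omega
    rw [h1, h2, ih (x/2) y (by omega)]
    omega

lemma s_mod_div (k n : ℕ) : s n = s (n % 2^k) + s (n / 2^k) := by
  have h := s_split k (n % 2^k) (n / 2^k) (Nat.mod_lt n (by positivity))
  rw [Nat.mod_add_div] at h
  exact h

lemma s_lt_pow (k : ℕ) : ∀ n : ℕ, n < 2^k → s n ≤ k := by
  induction k with
  | zero => intro n h; interval_cases n; simp [s_zero]
  | succ k ih =>
    intro n h
    rw [s_bits n]
    have := ih (n/2) (by omega)
    omega

lemma s_pred (n : ℕ) (h : Odd n) : s n = s (n - 1) + 1 := by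
  obtain ⟨w, hw⟩ := h
  subst hw
  have h1 : 2*w + 1 - 1 = 2*w := by omega
  rw [h1, s_odd, s_even]

lemma s_succ_le (n : ℕ) : s (n + 1) ≤ s n + 1 := by
  induction n using Nat.strong_induction_on with
  | _ n ih =>
    rcases Nat.even_or_odd n with ⟨w, hw⟩ | ⟨w, hw⟩
    · subst hw
      have : w + w = 2 * w := by ring
      rw [this, s_odd, s_even]
    · subst hw
      have h1 : 2*w + 1 + 1 = 2 * (w+1) := by ring
      rw [h1, s_even, s_odd]
      have := ih w (by omega)
      omega

lemma s_add_le (x : ℕ) : ∀ y : ℕ, s (x + y) ≤ s x + s y := by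
  induction x using Nat.strong_induction_on with
  | _ x ih =>
    intro y
    rcases Nat.eq_zero_or_pos x with h0 | h0
    · subst h0; simp [s_zero]
    rcases Nat.even_or_odd x with ⟨u, hu⟩ | ⟨u, hu⟩ <;>
      rcases Nat.even_or_odd y with ⟨v, hv⟩ | ⟨v, hv⟩
    · -- even even
      subst hu; subst hv
      have h1 : u + u + (v + v) = 2 * (u + v) := by ring
      have h2 : u + u = 2 * u := by ring
      have h3 : v + v = 2 * v := by ring
      rw [h1, h2, h3, s_even, s_even, s_even]
      exact ih u (by omega) v
    · -- even odd
      subst hu; subst hv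
      have h1 : u + u + (2*v + 1) = 2 * (u + v) + 1 := by ring
      have h2 : u + u = 2 * u := by ring
      rw [h1, h2, s_odd, s_even, s_odd]
      have := ih u (by omega) v
      omega
    · -- odd even
      subst hu; subst hv
      have h1 : 2*u + 1 + (v + v) = 2 * (u + v) + 1 := by ring
      have h3 : v + v = 2 * v := by ring
      rw [h1, h3, s_odd, s_odd, s_even]
      have := ih u (by omega) v
      omega
    · -- odd odd
      subst hu; subst hv
      have h1 : 2*u + 1 + (2*v + 1) = 2 * (u + v + 1) := by ring
      rw [h1, s_even, s_odd, s_odd]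
      have h2 := ih u (by omega) v
      have h3 := s_succ_le (u + v)
      omega

lemma s_mul_le (x : ℕ) : ∀ y : ℕ, s (x * y) ≤ s x * s y := by
  induction x using Nat.strong_induction_on with
  | _ x ih =>
    intro y
    rcases Nat.eq_zero_or_pos x with h0 | h0
    · subst h0; simp [s_zero]
    rcases Nat.even_or_odd x with ⟨u, hu⟩ | ⟨u, hu⟩
    · subst hu
      have h1 : (u + u) * y = 2 * (u * y) := by ring
      have h2 : u + u = 2 * u := by ring
      rw [h1, h2, s_even, s_even]
      exact ih u (by omega) y
    · subst hu
      have h1 : (2*u + 1) * y = 2 * (u * y) + y := by ring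
      rw [h1, s_odd]
      calc s (2 * (u*y) + y) ≤ s (2 * (u*y)) + s y := s_add_le _ _
        _ = s (u*y) + s y := by rw [s_even]
        _ ≤ s u * s y + s y := by have := ih u (by omega) y; omega
        _ = (s u + 1) * s y := by ring

lemma s_pow_sub_one (e : ℕ) : s (2^e - 1) = e := by
  induction e with
  | zero => simp [s_zero]
  | succ e ih =>
    have h1 : 2^(e+1) - 1 = 2 * (2^e - 1) + 1 := by
      have : 1 ≤ 2^e := Nat.one_le_two_pow
      omega
    rw [h1, s_odd, ih]

lemma s_SB (e x : ℕ) : s (2^e * (x + 1) - 1) = e + s x := by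
  have h1 : 2^e * (x+1) - 1 = (2^e - 1) + 2^e * x := by
    have : 1 ≤ 2^e := Nat.one_le_two_pow
    have : 2^e * (x+1) = 2^e * x + 2^e := by ring
    omega
  rw [h1, s_split e (2^e - 1) x (by have : 1 ≤ 2^e := Nat.one_le_two_pow; omega), s_pow_sub_one]

lemma s_Q (r : ℕ) : ∀ u v : ℕ, u + v + 1 = 2^r → s u + s v = r := by
  induction r with
  | zero =>
    intro u v h
    have h1 : u = 0 := by omega
    have h2 : v = 0 := by omega
    subst h1; subst h2; simp [s_zero]
  | succ r ih =>
    intro u v h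
    have hp : 2^(r+1) = 2 * 2^r := by ring
    rcases Nat.even_or_odd u with ⟨t, ht⟩ | ⟨t, ht⟩
    · -- u even, v odd
      obtain ⟨w, hw⟩ : ∃ w, v = 2*w + 1 := ⟨v/2, by omega⟩
      have hu : u = 2 * t := by omega
      subst hu; subst hw
      rw [s_even, s_odd]
      have := ih t w (by omega)
      omega
    · -- u odd, v even
      obtain ⟨w, hw⟩ : ∃ w, v = 2*w := ⟨v/2, by omega⟩
      have hu : u = 2 * t + 1 := by omega
      subst hu; subst hw
      rw [s_odd, s_even]
      have := ih t w (by omega)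
      omega
-- new material
lemma s_one' (n : ℕ) (h : s n = 1) : ∃ e, n = 2^e := by
  induction n using Nat.strong_induction_on with
  | _ n ih =>
    rcases Nat.eq_zero_or_pos n with h0 | h0
    · subst h0; rw [s_zero] at h; omega
    rcases Nat.even_or_odd n with ⟨t, ht⟩ | ⟨t, ht⟩
    · have hn : n = 2 * t := by omega
      subst hn
      rw [s_even] at h
      obtain ⟨e, he⟩ := ih t (by omega) h
      exact ⟨e+1, by rw [he]; ring⟩
    · subst ht
      rw [s_odd] at h
      have : t = 0 := by rw [← s_eq_zero]; omega
      subst this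
      exact ⟨0, by norm_num⟩

lemma s_odd_one (n : ℕ) (hn : Odd n) (h : s n = 1) : n = 1 := by
  obtain ⟨e, he⟩ := s_one' n h
  subst he
  rcases Nat.eq_zero_or_pos e with h0 | h0
  · subst h0; norm_num
  · exfalso
    obtain ⟨w, hw⟩ := hn
    have : 2^e = 2 * 2^(e-1) := by
      rw [← pow_succ']
      congr 1
      omega
    omega

lemma s_two' (n : ℕ) (h : s n = 2) : ∃ u v, u < v ∧ n = 2^u + 2^v := by
  induction n using Nat.strong_induction_on with
  | _ n ih =>
    rcases Nat.eq_zero_or_pos n with h0 | h0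
    · subst h0; rw [s_zero] at h; omega
    rcases Nat.even_or_odd n with ⟨t, ht⟩ | ⟨t, ht⟩
    · have hn : n = 2 * t := by omega
      subst hn
      rw [s_even] at h
      obtain ⟨u, v, huv, he⟩ := ih t (by omega) h
      exact ⟨u+1, v+1, by omega, by rw [he]; ring⟩
    · subst ht
      rw [s_odd] at h
      obtain ⟨e, he⟩ := s_one' t (by omega)
      subst he
      exact ⟨0, e+1, by omega, by rw [pow_succ]; ring⟩

lemma three_rep (n : ℕ) (hn : Odd n) (h : s n = 3) : ∃ i j, 0 < j ∧ j < i ∧ n = 2^i + 2^j + 1 := by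
  obtain ⟨t, ht⟩ := hn
  subst ht
  rw [s_odd] at h
  obtain ⟨u, v, huv, he⟩ := s_two' t (by omega)
  subst he
  refine ⟨v+1, u+1, by omega, by omega, ?_⟩
  rw [pow_succ, pow_succ]; ring

lemma odd_dvd_pow (a n : ℕ) (ha : Odd a) (h : a ∣ 2^n) : a = 1 := by
  have h2 : ¬ (2 ∣ a) := by
    rcases ha with ⟨w, hw⟩
    omega
  have hc : Nat.Coprime a 2 :=
    ((Nat.Prime.coprime_iff_not_dvd Nat.prime_two).mpr h2).symm
  exact Nat.Coprime.eq_one_of_dvd (Nat.Coprime.pow_right n hc) h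

lemma match2 (x : ℕ) : ∀ y g h : ℕ, g % 2 = 1 → h % 2 = 1 → 2^x * g = 2^y * h → x = y ∧ g = h := by
  induction x with
  | zero =>
    intro y g h hg hh he
    rcases Nat.eq_zero_or_pos y with h0 | h0
    · subst h0; simpa using he
    · exfalso
      obtain ⟨y', rfl⟩ : ∃ y', y = y' + 1 := ⟨y - 1, by omega⟩
      simp only [pow_zero, one_mul] at he
      have h3 : 2^(y'+1) * h = 2 * (2^y' * h) := by ring
      obtain ⟨k, hk⟩ : ∃ k, 2^y' * h = k := ⟨_, rfl⟩
      rw [hk] at h3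
      omega
  | succ x ih =>
    intro y g h hg hh he
    rcases Nat.eq_zero_or_pos y with h0 | h0
    · exfalso
      subst h0
      simp only [pow_zero, one_mul] at he
      have h3 : 2^(x+1) * g = 2 * (2^x * g) := by ring
      obtain ⟨k, hk⟩ : ∃ k, 2^x * g = k := ⟨_, rfl⟩
      rw [hk] at h3
      omega
    · obtain ⟨y', hy'⟩ : ∃ y', y = y' + 1 := ⟨y - 1, by omega⟩
      subst hy'
      have he2 : 2^x * g = 2^y' * h := by
        rw [show (2:ℕ)^(x+1) = 2 * 2^x by ring, show (2:ℕ)^(y'+1) = 2 * 2^y' by ring,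
          mul_assoc, mul_assoc] at he
        exact Nat.eq_of_mul_eq_mul_left (by norm_num) he
      have := ih y' g h hg hh he2
      omega

lemma extract (n : ℕ) (h : 0 < n) : ∃ e c, c % 2 = 1 ∧ n = 2^e * c := by
  induction n using Nat.strong_induction_on with
  | _ n ih =>
    rcases Nat.even_or_odd n with ⟨t, ht⟩ | ⟨t, ht⟩
    · have hn : n = 2 * t := by omega
      obtain ⟨e, c, hc, he⟩ := ih t (by omega) (by omega)
      exact ⟨e+1, c, hc, by rw [hn, he]; ring⟩
    · exact ⟨0, n, by omega, by norm_num⟩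
lemma count_win (τ : ℕ) : ∀ K b : ℕ, (∀ k, k < K → (b / 2^(τ*k)) % 2^τ ≠ 0) → K ≤ s b := by
  intro K
  induction K with
  | zero => intro b _; omega
  | succ K ih =>
    intro b H
    have h0 : b % 2^τ ≠ 0 := by
      have := H 0 (by omega)
      simpa using this
    have h1 : 1 ≤ s (b % 2^τ) := s_pos _ (by omega)
    have h2 : K ≤ s (b / 2^τ) := by
      apply ih
      intro k hk
      have h3 : b / 2^τ / 2^(τ*k) = b / 2^(τ*(k+1)) := by
        rw [Nat.div_div_eq_div_mul, ← pow_add]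
        congr 1
        ring
      rw [h3]
      exact H (k+1) (by omega)
    have h4 := s_mod_div τ b
    omega

lemma modwin (b q r P : ℕ) (h : q + r ≤ P) :
    (b % 2^P) / 2^q % 2^r = b / 2^q % 2^r := by
  have h1 : (2:ℕ)^P = 2^q * 2^(P - q) := by rw [← pow_add]; congr 1; omega
  rw [h1, Nat.mod_mul_right_div_self]
  exact Nat.mod_mod_of_dvd _ (pow_dvd_pow 2 (by omega))

lemma stepB (a b i j : ℕ) (ha : Odd a) (ha3 : 3 ≤ a) (hj : 0 < j) (hji : j < i)
    (heq : a * b = 2^i + 2^j + 1) : i ≤ Nat.size a * (s b + 2) := by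
  set τ := Nat.size a with hτdef
  have hτ : 0 < τ := Nat.size_pos.mpr (by omega)
  have haτ : a < 2^τ := Nat.lt_size_self a
  -- window claims
  have chunkzero : ∀ p, (b / 2^p) % 2^τ = 0 → b % 2^(p+τ) = b % 2^p := by
    intro p hc
    have e1 : b % 2^(p+τ) = b % 2^p + 2^p * (b / 2^p % 2^τ) := by
      rw [pow_add]; exact Nat.mod_mul
    rw [hc] at e1
    omega
  have modmul : ∀ p v, p + τ ≤ i → v < 2^(p+τ) → (a*b) % 2^(p+τ) = v % 2^(p+τ) →
      (b / 2^p) % 2^τ = 0 → a * (b % 2^p) = v := by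
    intro p v hpi hv hmod hc
    have e2 := chunkzero p hc
    have e3 : (a * (b % 2^(p+τ))) % 2^(p+τ) = (a * b) % 2^(p+τ) := by
      conv_rhs => rw [Nat.mul_mod]
      rw [Nat.mul_mod, Nat.mod_mod_of_dvd _ dvd_rfl]
    have e4 : a * (b % 2^p) < 2^(p+τ) := by
      rw [pow_add]
      have h5 : b % 2^p < 2^p := Nat.mod_lt _ (by positivity)
      calc a * (b % 2^p) < 2^τ * 2^p := by
            apply Nat.mul_lt_mul_of_lt_of_le haτ (by omega)
            positivity
        _ = 2^p * 2^τ := by ring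
    have e5 : a * (b % 2^p) % 2^(p+τ) = v % 2^(p+τ) := by
      rw [← e2, e3, hmod]
    have := Nat.mod_eq_of_lt e4
    have := Nat.mod_eq_of_lt hv
    omega
  have claim1 : ∀ p, p + τ ≤ j → (b / 2^p) % 2^τ ≠ 0 := by
    intro p hp hc
    have h1 : (a*b) % 2^(p+τ) = 1 % 2^(p+τ) := by
      obtain ⟨e1', he1⟩ : ∃ e', i = (p+τ) + e' := ⟨i - (p+τ), by omega⟩
      obtain ⟨e2', he2⟩ : ∃ e', j = (p+τ) + e' := ⟨j - (p+τ), by omega⟩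
      have : a*b = 2^(p+τ) * (2^e1' + 2^e2') + 1 := by
        rw [heq, he1, he2, pow_add, pow_add]; ring
      rw [this, Nat.mul_add_mod]
    have h2 := modmul p 1 (by omega) (by have := Nat.one_lt_two_pow_iff (n := p+τ); omega) h1 hc
    have : a ≤ 1 := Nat.le_of_dvd (by omega) ⟨b % 2^p, h2.symm⟩
    omega
  have claim2 : ∀ p, j < p → p + τ ≤ i → (b / 2^p) % 2^τ ≠ 0 := by
    intro p hp hpi hc
    have hjlt : 2^j + 1 < 2^(p+τ) := by
      have h6 : (2:ℕ)^j < 2^p := Nat.pow_lt_pow_right (by norm_num) hp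
      have h7 : (2:ℕ)^p ≤ 2^(p+τ) := Nat.pow_le_pow_right (by norm_num) (by omega)
      have h8 : (2:ℕ)^p < 2^(p+τ) := Nat.pow_lt_pow_right (by norm_num) (by omega)
      omega
    have h1 : (a*b) % 2^(p+τ) = (2^j + 1) % 2^(p+τ) := by
      obtain ⟨e1', he1⟩ : ∃ e', i = (p+τ) + e' := ⟨i - (p+τ), by omega⟩
      have : a*b = 2^(p+τ) * 2^e1' + (2^j + 1) := by
        rw [heq, he1, pow_add]; ring
      rw [this, Nat.mul_add_mod]
    have h2 := modmul p (2^j + 1) (by omega) hjlt h1 hc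
    -- a * (b - r) = 2^i
    set r := b % 2^p with hr
    have hrb : r ≤ b := Nat.mod_le _ _
    obtain ⟨q, hq⟩ : ∃ q, b = r + q := ⟨b - r, by omega⟩
    have h3 : a * b = a * r + a * q := by rw [hq]; ring
    have h4 : a * q = 2^i := by omega
    have h5 : a = 1 := odd_dvd_pow a i ha ⟨q, h4.symm⟩
    omega
  -- counting
  obtain ⟨q1, r1, hj1, hr1⟩ : ∃ q1 r1, j = τ*q1 + r1 ∧ r1 < τ :=
    ⟨j/τ, j%τ, (Nat.div_add_mod j τ).symm, Nat.mod_lt _ hτ⟩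
  have hbot : q1 ≤ s (b % 2^(τ*q1 + τ)) := by
    apply count_win τ q1
    intro k hk
    have h8 : τ*(k+1) ≤ τ*q1 := Nat.mul_le_mul_left τ (by omega)
    have h8' : τ*(k+1) = τ*k + τ := by ring
    have h9 : τ*k + τ ≤ τ*q1 + τ := by omega
    rw [modwin b (τ*k) τ (τ*q1 + τ) h9]
    exact claim1 (τ*k) (by omega)
  have hsplit := s_mod_div (τ*q1 + τ) b
  rcases le_or_gt (τ*q1 + τ) i with hPi | hPi
  · obtain ⟨q2, r2, hi2, hr2⟩ : ∃ q2 r2, i = (τ*q1 + τ) + (τ*q2 + r2) ∧ r2 < τ := by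
      refine ⟨(i-(τ*q1+τ))/τ, (i-(τ*q1+τ))%τ, ?_, Nat.mod_lt _ hτ⟩
      have := Nat.div_add_mod (i-(τ*q1+τ)) τ
      omega
    have htop : q2 ≤ s (b / 2^(τ*q1 + τ)) := by
      apply count_win τ q2
      intro k hk
      have h10 : b / 2^(τ*q1+τ) / 2^(τ*k) = b / 2^((τ*q1+τ) + τ*k) := by
        rw [Nat.div_div_eq_div_mul, ← pow_add]
      rw [h10]
      apply claim2 ((τ*q1+τ) + τ*k) (by omega)
      have h11 : τ*(k+1) ≤ τ*q2 := Nat.mul_le_mul_left τ (by omega)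
      have h12 : τ*(k+1) = τ*k + τ := by ring
      omega
    have hcount : q1 + q2 ≤ s b := by omega
    have h13 : τ*(q1+q2) ≤ τ*(s b) := Nat.mul_le_mul_left τ hcount
    have h14 : τ*(q1+q2) = τ*q1 + τ*q2 := by ring
    have h15 : τ*(s b + 2) = τ*(s b) + 2*τ := by ring
    omega
  · have hcount : q1 ≤ s b := by omega
    have h13 : τ*q1 ≤ τ*(s b) := Nat.mul_le_mul_left τ hcount
    have h15 : τ*(s b + 2) = τ*(s b) + 2*τ := by ring
    omega

lemma size_low (n : ℕ) (h : 0 < n) : 2^(Nat.size n - 1) ≤ n := by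
  have h1 : 0 < Nat.size n := Nat.size_pos.mpr h
  exact Nat.lt_size.mp (by omega)

lemma size_addpow_le (a α a₁ : ℕ) (h : a = 2^α * a₁ + 1) (h1 : 0 < a₁) :
    α + Nat.size a₁ ≤ Nat.size a := by
  have hP : 0 < Nat.size a₁ := Nat.size_pos.mpr h1
  have h2 : 2^(Nat.size a₁ - 1) ≤ a₁ := size_low a₁ h1
  have h3 : (2:ℕ)^(α + (Nat.size a₁ - 1)) ≤ 2^α * a₁ := by
    rw [pow_add]
    exact Nat.mul_le_mul_left _ h2
  have h4 : 2^(α + (Nat.size a₁ - 1)) ≤ a := by omega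
  have h5 := Nat.lt_size.mpr h4
  omega

lemma size_up_le (a α a₁ : ℕ) (h : a = 2^α * a₁ + 1) (h1 : 0 < a₁) :
    Nat.size a ≤ α + Nat.size a₁ + 1 := by
  rw [Nat.size_le]
  have h2 : a₁ < 2^(Nat.size a₁) := Nat.lt_size_self a₁
  have h3 : 2^α * a₁ + 1 ≤ 2^α * (2^(Nat.size a₁) - 1) + 1 := by
    have := Nat.mul_le_mul_left (2^α) (show a₁ ≤ 2^(Nat.size a₁) - 1 by omega)
    omega
  have h4 : (2:ℕ)^(α + Nat.size a₁) = 2^α * 2^(Nat.size a₁) := pow_add 2 α _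
  have h5 : (2:ℕ)^(α + Nat.size a₁ + 1) = 2^α * 2^(Nat.size a₁) * 2 := by
    rw [pow_succ, h4]
  have h6 : 2^α * (2^(Nat.size a₁) - 1) + 1 ≤ 2^α * 2^(Nat.size a₁) := by
    have h7 : 1 ≤ (2:ℕ)^(Nat.size a₁) := Nat.one_le_two_pow
    have h8 : 2^α * (2^(Nat.size a₁) - 1) + 2^α = 2^α * 2^(Nat.size a₁) := by
      rw [Nat.mul_sub_one]
      have h9 : (2:ℕ)^α ≤ 2^α * 2^(Nat.size a₁) := Nat.le_mul_of_pos_right _ (by positivity)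
      omega
    have h10 : 1 ≤ (2:ℕ)^α := Nat.one_le_two_pow
    omega
  have h11 : 0 < 2^α * 2^(Nat.size a₁) := by positivity
  omega

lemma sum_lt_pow_add (x y : ℕ) (hx : 0 < x) (hy : 0 < y) :
    x + y < 2^(Nat.size x + Nat.size y) := by
  have h1 : x < 2^(Nat.size x) := Nat.lt_size_self x
  have h2 : y < 2^(Nat.size y) := Nat.lt_size_self y
  have hPx : 0 < Nat.size x := Nat.size_pos.mpr hx
  have hPy : 0 < Nat.size y := Nat.size_pos.mpr hy
  have h3 : (2:ℕ)^(Nat.size x) ≤ 2^(Nat.size x + Nat.size y - 1) :=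
    Nat.pow_le_pow_right (by norm_num) (by omega)
  have h4 : (2:ℕ)^(Nat.size y) ≤ 2^(Nat.size x + Nat.size y - 1) :=
    Nat.pow_le_pow_right (by norm_num) (by omega)
  have h5 : (2:ℕ)^(Nat.size x + Nat.size y) = 2^(Nat.size x + Nat.size y - 1) * 2 := by
    rw [← pow_succ]
    congr 1
    omega
  omega

lemma gem (α a₁ b₁ : ℕ) (hα : 0 < α) (ha₁ : Odd a₁) (hb₁ : Odd b₁)
    (hdvd : 2^α ∣ a₁ + b₁) : α + 1 ≤ s a₁ + s b₁ := by
  have h2 : (2:ℕ) ∣ 2^α := dvd_pow_self 2 (by omega)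
  obtain ⟨wa, hwa⟩ := ha₁
  obtain ⟨wb, hwb⟩ := hb₁
  have hxodd : a₁ % 2^α % 2 = 1 := by
    rw [Nat.mod_mod_of_dvd _ h2]
    omega
  have hyodd : b₁ % 2^α % 2 = 1 := by
    rw [Nat.mod_mod_of_dvd _ h2]
    omega
  have hxlt : a₁ % 2^α < 2^α := Nat.mod_lt _ (by positivity)
  have hylt : b₁ % 2^α < 2^α := Nat.mod_lt _ (by positivity)
  have hsum : a₁ % 2^α + b₁ % 2^α = 2^α := by
    have h4 : (a₁ + b₁) % 2^α = 0 := by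
      obtain ⟨k, hk⟩ := hdvd
      rw [hk]
      simp [Nat.mul_mod_right]
    have h3 : (a₁ % 2^α + b₁ % 2^α) % 2^α = 0 :=
      (Nat.add_mod a₁ b₁ (2^α)).symm.trans h4
    obtain ⟨k, hk⟩ := Nat.dvd_of_mod_eq_zero h3
    have hk1 : k = 1 := by
      by_contra hne
      rcases Nat.lt_or_ge k 2 with h | h
      · interval_cases k <;> omega
      · have h5 : 2^α * 2 ≤ 2^α * k := Nat.mul_le_mul_left _ h
        omega
    subst hk1
    omega
  have hQ := s_Q α (b₁ % 2^α) (a₁ % 2^α - 1) (by omega)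
  have hx1 : Odd (a₁ % 2^α) := ⟨a₁ % 2^α / 2, by omega⟩
  have hp := s_pred _ hx1
  have hma := s_mod_div α a₁
  have hmb := s_mod_div α b₁
  omega

lemma s_three (i j : ℕ) (hj : 0 < j) (hji : j < i) : s (2^i + 2^j + 1) = 3 := by
  obtain ⟨d, hd⟩ : ∃ d, i = j + d ∧ 0 < d := ⟨i - j, by omega⟩
  have h1 : 2^i + 2^j + 1 = 1 + 2^j * (1 + 2^d * 1) := by
    rw [hd.1, pow_add]; ring
  rw [h1, s_split j 1 _ (Nat.one_lt_two_pow_iff.mpr (by omega)),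
    s_split d 1 1 (Nat.one_lt_two_pow_iff.mpr (by omega)), s_one]

lemma caseLT (a b i j α β a₁ b₁ : ℕ) (ha : Odd a) (hb : Odd b)
    (hsa2 : 2 ≤ s a) (hsb2 : 2 ≤ s b) (hj : 0 < j) (hji : j < i)
    (heq : a * b = 2^i + 2^j + 1)
    (hα : 0 < α) (hab1 : Odd a₁) (hbb1 : Odd b₁)
    (hA : a = 2^α * a₁ + 1) (hB : b = 2^β * b₁ + 1) (hαβ : α < β) :
    i ≤ (s a * s b) * (s b + 2) := by
  obtain ⟨wa, hwa⟩ := hab1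
  obtain ⟨wb, hwb⟩ := hbb1
  have ha₁pos : 0 < a₁ := by omega
  have hb₁pos : 0 < b₁ := by omega
  have ha3 : 3 ≤ a := by
    have h1 : 1 ≤ 2^α := Nat.one_le_two_pow
    have h2 : 1 * 1 ≤ 2^α * a₁ := Nat.mul_le_mul h1 (by omega)
    -- a odd and a ≥ 2
    obtain ⟨w, hw⟩ := ha
    omega
  -- digit sums of the parts
  have hsa1 : s a = s a₁ + 1 := by
    have e : a - 1 = 2^α * a₁ := by omega
    have h1 := s_pred a ha
    rw [e, s_pow_mul] at h1
    exact h1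
  have hsb1 : s b = s b₁ + 1 := by
    have e : b - 1 = 2^β * b₁ := by omega
    have h1 := s_pred b hb
    rw [e, s_pow_mul] at h1
    exact h1
  obtain ⟨g, hg, hβg⟩ : ∃ g, 0 < g ∧ β = α + g := ⟨β - α, by omega, by omega⟩
  obtain ⟨d, hd, hid⟩ : ∃ d, 0 < d ∧ i = j + d := ⟨i - j, by omega, by omega⟩
  -- main factored equation
  have E0 : 2^α * (a₁ + 2^g*b₁ + 2^(α+g)*(a₁*b₁)) = 2^j * (1 + 2^d) := by
    have e1 : 2^α * (a₁ + 2^g*b₁ + 2^(α+g)*(a₁*b₁)) + 1 = 2^i + 2^j + 1 := by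
      rw [← heq, hA, hB, hβg]; ring
    have e2 : (2^j:ℕ) * (1 + 2^d) = 2^j + 2^i := by
      rw [hid, pow_add]; ring
    omega
  have hGodd : (a₁ + 2^g*b₁ + 2^(α+g)*(a₁*b₁)) % 2 = 1 := by
    obtain ⟨g', hg'⟩ : ∃ g', g = g'+1 := ⟨g-1, by omega⟩
    have e3 : a₁ + 2^g*b₁ + 2^(α+g)*(a₁*b₁) = 2*(wa + 2^g'*b₁ + 2^(α+g')*(a₁*b₁)) + 1 := by
      rw [hwa, hg']; ring
    omega
  have hHodd : (1 + 2^d) % 2 = 1 := by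
    obtain ⟨d', hd'⟩ : ∃ d', d = d'+1 := ⟨d-1, by omega⟩
    have e4 : (1:ℕ) + 2^d = 2*(2^d') + 1 := by rw [hd']; ring
    omega
  obtain ⟨hjα, hG⟩ := match2 α j _ _ hGodd hHodd E0
  -- rearrange : a₁ + 2^g * (a * b₁) = 1 + 2^d
  have hG2 : a₁ + 2^g*(a*b₁) = 1 + 2^d := by
    rw [← hG, hA]; ring
  have habpos : 0 < a * b₁ := by positivity
  have hWpos : 0 < 2^g * (a*b₁) := by positivity
  have hQ := s_Q d (a₁ - 1) (2^g*(a*b₁) - 1) (by omega)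
  have hpa : s a₁ = s (a₁ - 1) + 1 := s_pred a₁ ⟨wa, hwa⟩
  have hSB := s_SB g (a*b₁ - 1)
  rw [show a*b₁ - 1 + 1 = a*b₁ by omega] at hSB
  have habodd : Odd (a * b₁) := Odd.mul ha ⟨wb, hwb⟩
  have hpab : s (a*b₁) = s (a*b₁ - 1) + 1 := s_pred _ habodd
  have hmul : s (a*b₁) ≤ s a * s b₁ := s_mul_le a b₁
  -- i = β + s a - 3 + s (a*b₁)
  have hi : i + 3 = β + s a + s (a*b₁) := by omega
  -- size facts
  have hβPb : β < Nat.size b := by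
    apply Nat.lt_size.mpr
    have h1 : (2:ℕ)^β * 1 ≤ 2^β * b₁ := Nat.mul_le_mul_left _ (by omega)
    omega
  have hPP : Nat.size a + Nat.size b ≤ i + 3 := by
    have h1 : 2^(Nat.size a - 1) ≤ a := size_low a (by omega)
    have h2 : 2^(Nat.size b - 1) ≤ b := size_low b (by omega)
    have h3 : 2^(Nat.size a - 1) * 2^(Nat.size b - 1) ≤ a * b := Nat.mul_le_mul h1 h2
    have h4 : (2:ℕ)^(Nat.size a - 1 + (Nat.size b - 1)) = 2^(Nat.size a - 1) * 2^(Nat.size b - 1) := pow_add 2 _ _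
    have h5 : a * b ≤ 2^(i+1) := by
      rw [heq]
      have h6 : (2:ℕ)^j < 2^i := Nat.pow_lt_pow_right (by norm_num) (by omega)
      have h7 : (2:ℕ)^(i+1) = 2^i * 2 := pow_succ 2 i
      have h8 : (1:ℕ) ≤ 2^i := Nat.one_le_two_pow
      omega
    have h9 : (2:ℕ)^(Nat.size a - 1 + (Nat.size b - 1)) ≤ 2^(i+1) := by
      calc (2:ℕ)^(Nat.size a - 1 + (Nat.size b - 1)) = 2^(Nat.size a - 1) * 2^(Nat.size b - 1) := h4
        _ ≤ a * b := h3
        _ ≤ 2^(i+1) := h5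
    have h10 : Nat.size a - 1 + (Nat.size b - 1) ≤ i + 1 :=
      (Nat.pow_le_pow_iff_right (by norm_num)).mp h9
    have hPa1 : 0 < Nat.size a := Nat.size_pos.mpr (by omega)
    have hPb1 : 0 < Nat.size b := Nat.size_pos.mpr (by omega)
    omega
  -- bound on size a
  have hPaB : Nat.size a ≤ s a * s b := by
    have h1 : s a * s b = s a * s b₁ + s a := by rw [hsb1]; ring
    omega
  have hstep := stepB a b i j ha ha3 hj hji heq
  have hfin : Nat.size a * (s b + 2) ≤ (s a * s b) * (s b + 2) :=
    Nat.mul_le_mul_right _ hPaB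
  omega

lemma sizeIP (a b i j : ℕ) (heq : a * b = 2^i + 2^j + 1) :
    i < Nat.size a + Nat.size b := by
  have h1 : a < 2^(Nat.size a) := Nat.lt_size_self a
  have h2 : b ≤ 2^(Nat.size b) := le_of_lt (Nat.lt_size_self b)
  have h3 : a * b < 2^(Nat.size a) * 2^(Nat.size b) :=
    Nat.mul_lt_mul_of_lt_of_le h1 h2 (by positivity)
  have h4 : (2:ℕ)^(Nat.size a + Nat.size b) = 2^(Nat.size a) * 2^(Nat.size b) := pow_add 2 _ _
  have h5 : (2:ℕ)^i < 2^(Nat.size a + Nat.size b) := by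
    have h6 : (2:ℕ)^i ≤ a * b := by
      rw [heq, add_assoc]
      exact Nat.le_add_right _ _
    calc (2:ℕ)^i ≤ a * b := h6
      _ < 2^(Nat.size a) * 2^(Nat.size b) := h3
      _ = 2^(Nat.size a + Nat.size b) := h4.symm
  exact (Nat.pow_lt_pow_iff_right (by norm_num)).mp h5

lemma sizePP (a b i j : ℕ) (ha : 0 < a) (hb : 0 < b) (hji : j < i)
    (heq : a * b = 2^i + 2^j + 1) : Nat.size a + Nat.size b ≤ i + 3 := by
  have h1 : 2^(Nat.size a - 1) ≤ a := size_low a ha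
  have h2 : 2^(Nat.size b - 1) ≤ b := size_low b hb
  have h3 : 2^(Nat.size a - 1) * 2^(Nat.size b - 1) ≤ a * b := Nat.mul_le_mul h1 h2
  have h4 : (2:ℕ)^(Nat.size a - 1 + (Nat.size b - 1)) = 2^(Nat.size a - 1) * 2^(Nat.size b - 1) := pow_add 2 _ _
  have h5 : a * b ≤ 2^(i+1) := by
    rw [heq]
    have h6 : (2:ℕ)^j < 2^i := Nat.pow_lt_pow_right (by norm_num) (by omega)
    have h7 : (2:ℕ)^(i+1) = 2^i * 2 := pow_succ 2 i
    omega
  have h9 : (2:ℕ)^(Nat.size a - 1 + (Nat.size b - 1)) ≤ 2^(i+1) := by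
    calc (2:ℕ)^(Nat.size a - 1 + (Nat.size b - 1)) = 2^(Nat.size a - 1) * 2^(Nat.size b - 1) := h4
      _ ≤ a * b := h3
      _ ≤ 2^(i+1) := h5
  have h10 : Nat.size a - 1 + (Nat.size b - 1) ≤ i + 1 :=
    (Nat.pow_le_pow_iff_right (by norm_num)).mp h9
  have hPa1 : 0 < Nat.size a := Nat.size_pos.mpr ha
  have hPb1 : 0 < Nat.size b := Nat.size_pos.mpr hb
  omega

lemma core (a b i j : ℕ) (ha : Odd a) (hb : Odd b) (hsa2 : 2 ≤ s a) (hsb2 : 2 ≤ s b)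
    (hmax : 3 ≤ s a ∨ 3 ≤ s b) (hj : 0 < j) (hji : j < i)
    (heq : a * b = 2^i + 2^j + 1) :
    i ≤ (s a * s b + s a + s b + 9) * (s a + s b + 9) := by
  obtain ⟨wA, hwA⟩ := ha
  obtain ⟨wB, hwB⟩ := hb
  have ha1 : a ≠ 1 := by intro h; rw [h, s_one] at hsa2; omega
  have ha0 : a ≠ 0 := by intro h; rw [h, s_zero] at hsa2; omega
  have hb1 : b ≠ 1 := by intro h; rw [h, s_one] at hsb2; omega
  have hb0 : b ≠ 0 := by intro h; rw [h, s_zero] at hsb2; omega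
  have ha3 : 3 ≤ a := by omega
  have hb3 : 3 ≤ b := by omega
  obtain ⟨α, a₁, ha₁m, hαe⟩ := extract (a-1) (by omega)
  have hα : 0 < α := by
    by_contra hc
    have h0 : α = 0 := by omega
    subst h0
    simp only [pow_zero, one_mul] at hαe
    omega
  have hA : a = 2^α * a₁ + 1 := by omega
  have hab1 : Odd a₁ := ⟨a₁/2, by omega⟩
  obtain ⟨β, b₁, hb₁m, hβe⟩ := extract (b-1) (by omega)
  have hβ : 0 < β := by
    by_contra hc
    have h0 : β = 0 := by omega
    subst h0
    simp only [pow_zero, one_mul] at hβe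
    omega
  have hB : b = 2^β * b₁ + 1 := by omega
  have hbb1 : Odd b₁ := ⟨b₁/2, by omega⟩
  have ha₁pos : 0 < a₁ := by omega
  have hb₁pos : 0 < b₁ := by omega
  rcases lt_trichotomy α β with hlt | heqab | hgt
  · -- α < β : asymmetric case
    have h := caseLT a b i j α β a₁ b₁ ⟨wA, hwA⟩ ⟨wB, hwB⟩ hsa2 hsb2 hj hji heq hα hab1 hbb1 hA hB hlt
    calc i ≤ (s a * s b) * (s b + 2) := h
      _ ≤ (s a * s b + s a + s b + 9) * (s a + s b + 9) := Nat.mul_le_mul (by omega) (by omega)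
  · -- α = β : symmetric case
    subst heqab
    -- digit sums of parts
    have hsa1 : s a = s a₁ + 1 := by
      have e : a - 1 = 2^α * a₁ := by omega
      have h1 := s_pred a ⟨wA, hwA⟩
      rw [e, s_pow_mul] at h1
      exact h1
    have hsb1 : s b = s b₁ + 1 := by
      have e : b - 1 = 2^α * b₁ := by omega
      have h1 := s_pred b ⟨wB, hwB⟩
      rw [e, s_pow_mul] at h1
      exact h1
    have hrel : s a * s b = s a₁ * s b₁ + s a₁ + s b₁ + 1 := by
      rw [hsa1, hsb1]; ring
    -- a₁ b₁ not both 1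
    have habodd : Odd (a₁ * b₁) := Odd.mul hab1 hbb1
    obtain ⟨wp, hwp⟩ := habodd
    have hne3 : 3 ≤ a₁ * b₁ := by
      rcases Nat.lt_or_ge (a₁ * b₁) 3 with hlt3 | hge3
      · exfalso
        have h1 : a₁ * b₁ = 1 := by omega
        have h2 : a₁ ≤ 1 := Nat.le_of_dvd one_pos ⟨b₁, h1.symm⟩
        have h3 : a₁ = 1 := by omega
        have h4 : b₁ = 1 := by rw [h3] at h1; omega
        rw [h3, s_one] at hsa1
        rw [h4, s_one] at hsb1
        omega
      · exact hge3
    have hs2ab : 2 ≤ s (a₁ * b₁) := by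
      have h1 : s (a₁*b₁) ≠ 0 := by
        have := (s_eq_zero (a₁*b₁))
        omega
      have h2 : s (a₁*b₁) ≠ 1 := by
        intro h
        have := s_odd_one (a₁*b₁) ⟨wp, hwp⟩ h
        omega
      omega
    have hmulab : s (a₁*b₁) ≤ s a₁ * s b₁ := s_mul_le _ _
    -- main equation
    have E0 : 2^α*(a₁+b₁) + 2^(α+α)*(a₁*b₁) = 2^i + 2^j := by
      have e1 : 2^α*(a₁+b₁) + 2^(α+α)*(a₁*b₁) + 1 = 2^i + 2^j + 1 := by
        rw [← heq, hA, hB]; ring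
      omega
    obtain ⟨γ, c, hcm, hγe⟩ := extract (a₁+b₁) (by omega)
    have hγ : 0 < γ := by
      by_contra hc
      have h0 : γ = 0 := by omega
      subst h0
      simp only [pow_zero, one_mul] at hγe
      obtain ⟨wa1, hwa1⟩ := hab1
      obtain ⟨wb1, hwb1⟩ := hbb1
      omega
    have hcodd : Odd c := ⟨c/2, by omega⟩
    have hcpos : 0 < c := by omega
    have hsc : s c ≤ s a₁ + s b₁ := by
      have h1 : s (a₁+b₁) ≤ s a₁ + s b₁ := s_add_le _ _
      rw [hγe, s_pow_mul] at h1
      exact h1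
    obtain ⟨d, hd, hid⟩ : ∃ d, 0 < d ∧ i = j + d := ⟨i - j, by omega, by omega⟩
    have hd2 : (2:ℕ)^j * (1 + 2^d) = 2^j + 2^i := by
      rw [hid, pow_add]; ring
    -- size facts
    have hPa_low : α + Nat.size a₁ ≤ Nat.size a := size_addpow_le a α a₁ hA ha₁pos
    have hPb_low : α + Nat.size b₁ ≤ Nat.size b := size_addpow_le b α b₁ hB hb₁pos
    have hPa_up : Nat.size a ≤ α + Nat.size a₁ + 1 := size_up_le a α a₁ hA ha₁pos
    have hPb_up : Nat.size b ≤ α + Nat.size b₁ + 1 := size_up_le b α b₁ hB hb₁pos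
    have hPP := sizePP a b i j (by omega) (by omega) hji heq
    have hIP := sizeIP a b i j heq
    have hPa₁pos : 0 < Nat.size a₁ := Nat.size_pos.mpr ha₁pos
    have hPb₁pos : 0 < Nat.size b₁ := Nat.size_pos.mpr hb₁pos
    rcases lt_trichotomy γ α with hγα | hγα | hγα
    · -- 2a : γ < α
      obtain ⟨e, he1, hαγe⟩ : ∃ e, 0 < e ∧ α = γ + e := ⟨α - γ, by omega, by omega⟩
      have E1 : 2^(α+γ)*(c + 2^e*(a₁*b₁)) = 2^j*(1+2^d) := by
        have e1 : 2^α*(a₁+b₁) + 2^(α+α)*(a₁*b₁) = 2^(α+γ)*(c + 2^e*(a₁*b₁)) := by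
          rw [hγe, hαγe]; ring
        omega
      have hGodd : (c + 2^e*(a₁*b₁)) % 2 = 1 := by
        obtain ⟨e', he'⟩ : ∃ e', e = e'+1 := ⟨e-1, by omega⟩
        have e3 : c + 2^e*(a₁*b₁) = 2*((c-1)/2 + 2^e'*(a₁*b₁)) + 1 := by
          obtain ⟨wc, hwc⟩ : ∃ wc, c = 2*wc+1 := ⟨c/2, by omega⟩
          rw [hwc, he']
          have : (2*wc+1-1)/2 = wc := by omega
          rw [this]; ring
        omega
      have hHodd : (1 + 2^d) % 2 = 1 := by
        obtain ⟨d', hd'⟩ : ∃ d', d = d'+1 := ⟨d-1, by omega⟩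
        have e4 : (1:ℕ) + 2^d = 2*(2^d') + 1 := by rw [hd']; ring
        omega
      obtain ⟨hjeq, hG⟩ := match2 (α+γ) j _ _ hGodd hHodd E1
      -- exclude c = 1
      have hc3 : 3 ≤ c := by
        rcases Nat.lt_or_ge c 3 with hc1 | hc1
        · exfalso
          have hc1' : c = 1 := by omega
          have h1 : 2^e*(a₁*b₁) = 2^d := by omega
          have h2 : (a₁*b₁) * 2^e = 2^d := by
            have : 2^e*(a₁*b₁) = (a₁*b₁)*2^e := by ring
            omega
          have := odd_dvd_pow (a₁*b₁) d ⟨wp, hwp⟩ ⟨2^e, h2.symm⟩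
          omega
        · exact hc1
      have hWpos : 0 < 2^e*(a₁*b₁) := by positivity
      have hQ := s_Q d (c-1) (2^e*(a₁*b₁) - 1) (by omega)
      have hpc : s c = s (c-1) + 1 := s_pred c hcodd
      have hSB := s_SB e (a₁*b₁ - 1)
      rw [show a₁*b₁ - 1 + 1 = a₁*b₁ by omega] at hSB
      have hpab : s (a₁*b₁) = s (a₁*b₁ - 1) + 1 := s_pred _ ⟨wp, hwp⟩
      have hieq : i + 2 = 2*α + s c + s (a₁*b₁) := by omega
      -- bound α by size of a₁+b₁
      have hαP : α ≤ Nat.size (a₁+b₁) := by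
        by_contra hcon
        push_neg at hcon
        have hx1 : a₁+b₁ < 2^(Nat.size (a₁+b₁)) := Nat.lt_size_self _
        have hx2 : (2:ℕ)^(Nat.size (a₁+b₁)) ≤ 2^(α-1) :=
          Nat.pow_le_pow_right (by norm_num) (by omega)
        have hx3 : 2^α*(a₁+b₁) < 2^α * 2^(α-1) := by
          apply (Nat.mul_lt_mul_left (by positivity)).mpr
          omega
        have hx4 : (2:ℕ)^α * 2^(α-1) = 2^(α + (α-1)) := (pow_add 2 α (α-1)).symm
        have hx5 : (2:ℕ)^(α+α) = 2^(α+(α-1)) * 2 := by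
          rw [← pow_succ]
          congr 1
          omega
        have hxlt : 1 + 2^α*(a₁+b₁) < 2^(α+α) := by omega
        have hab2 : a*b = (1 + 2^α*(a₁+b₁)) + 2^(α+α)*(a₁*b₁) := by
          rw [hA, hB]; ring
        have h3 : s (a*b) = 3 := by rw [heq]; exact s_three i j hj hji
        rw [hab2, s_split (α+α) _ _ hxlt] at h3
        rw [s_split α 1 (a₁+b₁) (Nat.one_lt_two_pow_iff.mpr (by omega)), s_one] at h3
        have h4 : 1 ≤ s (a₁+b₁) := s_pos _ (by omega)
        omega
      have hPsum : Nat.size (a₁+b₁) ≤ Nat.size a₁ + Nat.size b₁ :=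
        Nat.size_le.mpr (sum_lt_pow_add a₁ b₁ ha₁pos hb₁pos)
      -- linear bound on i
      have hlin : i ≤ 3*(s a * s b) + 3*(s a) + 3*(s b) + 20 := by omega
      have hfin : 3*(s a * s b) + 3*(s a) + 3*(s b) + 20 ≤
          (s a * s b + s a + s b + 9) * (s a + s b + 9) := by
        have k1 : (s a * s b + s a + s b + 9)*9 ≤ (s a * s b + s a + s b + 9) * (s a + s b + 9) :=
          Nat.mul_le_mul_left _ (by omega)
        have k2 : (s a * s b + s a + s b + 9)*9 = 9*(s a * s b) + 9*(s a) + 9*(s b) + 81 := by ring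
        omega
      omega
    · -- 2c : γ = α
      subst hγα
      have hsum : a₁ + b₁ = 2^γ * c := hγe
      obtain ⟨δ, D, hDm, hδe⟩ := extract (c + a₁*b₁) (by omega)
      have hδ : 0 < δ := by
        by_contra hc
        have h0 : δ = 0 := by omega
        subst h0
        simp only [pow_zero, one_mul] at hδe
        omega
      have e0 : 2^γ*(a₁+b₁) + 2^(γ+γ)*(a₁*b₁) = 2^(γ+γ)*(c + a₁*b₁) := by
        rw [hsum]; ring
      have e1 : 2^(γ+γ+δ)*D = 2^j*(1+2^d) := by
        have e2 : 2^(γ+γ)*(c + a₁*b₁) = 2^(γ+γ+δ)*D := by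
          rw [hδe, pow_add]; ring
        omega
      have hHodd : (1 + 2^d) % 2 = 1 := by
        obtain ⟨d', hd'⟩ : ∃ d', d = d'+1 := ⟨d-1, by omega⟩
        have e4 : (1:ℕ) + 2^d = 2*(2^d') + 1 := by rw [hd']; ring
        omega
      obtain ⟨hjeq, hD⟩ := match2 (γ+γ+δ) j _ _ (by omega) hHodd e1
      have hcT : c + a₁*b₁ = 2^δ + 2^(δ+d) := by
        have e2 : c + a₁*b₁ = 2^δ * (1 + 2^d) := by rw [hδe, hD]
        have e3 : (2:ℕ)^δ * (1 + 2^d) = 2^δ + 2^(δ+d) := by rw [pow_add]; ring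
        omega
      have hcne : c ≠ 2^δ := by
        intro hcc
        obtain ⟨δ', hδ'⟩ : ∃ δ', δ = δ'+1 := ⟨δ-1, by omega⟩
        rw [hδ'] at hcc
        have : (2:ℕ)^(δ'+1) = 2*2^δ' := by ring
        omega
      have hδd : (2:ℕ)^δ < 2^(δ+d) := Nat.pow_lt_pow_right (by norm_num) (by omega)
      have hgem := gem γ a₁ b₁ hγ hab1 hbb1 ⟨c, hsum⟩
      rcases lt_or_gt_of_ne hcne with hclt | hcgt
      · -- 2c-i : c < 2^δ
        have hP : (2^δ - c) + 2^(δ+d)*1 = a₁*b₁ := by omega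
        have hs1 : s (a₁*b₁) = s (2^δ - c) + 1 := by
          rw [← hP, s_split (δ+d) _ 1 (by omega), s_one]
        have hQ := s_Q δ (2^δ - c) (c - 1) (by omega)
        have hpc : s c = s (c-1) + 1 := s_pred c hcodd
        -- sizes
        have hx1 : (2:ℕ)^(γ+δ) = 2^γ*2^δ := pow_add 2 γ δ
        have hx2 : 2^γ*c < 2^γ*2^δ := by
          apply (Nat.mul_lt_mul_left (by positivity)).mpr hclt
        have hPa₁ : Nat.size a₁ ≤ γ + δ := Nat.size_le.mpr (by omega)
        have hPb₁ : Nat.size b₁ ≤ γ + δ := Nat.size_le.mpr (by omega)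
        have hlin : i ≤ 4*(s a * s b) + 4*(s a) + 4*(s b) + 20 := by omega
        have hfin : 4*(s a * s b) + 4*(s a) + 4*(s b) + 20 ≤
            (s a * s b + s a + s b + 9) * (s a + s b + 9) := by
          have k1 : (s a * s b + s a + s b + 9)*9 ≤ (s a * s b + s a + s b + 9) * (s a + s b + 9) :=
            Nat.mul_le_mul_left _ (by omega)
          have k2 : (s a * s b + s a + s b + 9)*9 = 9*(s a * s b) + 9*(s a) + 9*(s b) + 81 := by ring
          omega
        omega
      · -- 2c-ii : c > 2^δ
        have hQ := s_Q (δ+d) (c - 2^δ) (a₁*b₁ - 1) (by omega)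
        have hpab : s (a₁*b₁) = s (a₁*b₁ - 1) + 1 := s_pred _ ⟨wp, hwp⟩
        have hscd : s (c - 2^δ) ≤ Nat.size c := by
          apply s_lt_pow
          exact lt_of_le_of_lt (Nat.sub_le _ _) (Nat.lt_size_self c)
        -- Pc bound, by symmetry on sizes
        have hsum' : 2^γ * c = a₁ + b₁ := hsum.symm
        rcases le_total (Nat.size a₁) (Nat.size b₁) with hle | hle
        · -- size a₁ ≤ size b₁ : bound size a, apply stepB on (a,b)
          have h2 : a₁ + b₁ < 2^(Nat.size b₁ + 1) := by
            have g1 : a₁ < 2^(Nat.size a₁) := Nat.lt_size_self a₁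
            have g2 : b₁ < 2^(Nat.size b₁) := Nat.lt_size_self b₁
            have g3 : (2:ℕ)^(Nat.size a₁) ≤ 2^(Nat.size b₁) :=
              Nat.pow_le_pow_right (by norm_num) hle
            have g4 : (2:ℕ)^(Nat.size b₁ + 1) = 2^(Nat.size b₁)*2 := pow_succ 2 _
            omega
          have hαle : γ < Nat.size b₁ + 1 := by
            have g5 : (2:ℕ)^γ ≤ 2^γ * c := Nat.le_mul_of_pos_right _ hcpos
            have g6 : (2:ℕ)^γ < 2^(Nat.size b₁ + 1) := by omega
            exact (Nat.pow_lt_pow_iff_right (by norm_num)).mp g6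
          have hc_lt : c < 2^(Nat.size b₁ + 1 - γ) := by
            have g7 : (2:ℕ)^(Nat.size b₁ + 1) = 2^γ * 2^(Nat.size b₁ + 1 - γ) := by
              rw [← pow_add]
              congr 1
              omega
            have g8 : 2^γ * c < 2^γ * 2^(Nat.size b₁ + 1 - γ) := by omega
            exact Nat.lt_of_mul_lt_mul_left g8
          have hPc : Nat.size c ≤ Nat.size b₁ + 1 - γ := Nat.size_le.mpr hc_lt
          have hPaK : Nat.size a ≤ s a * s b + s a + s b := by omega
          have hstep := stepB a b i j ⟨wA, hwA⟩ ha3 hj hji heq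
          calc i ≤ Nat.size a * (s b + 2) := hstep
            _ ≤ (s a * s b + s a + s b) * (s b + 2) := Nat.mul_le_mul_right _ hPaK
            _ ≤ (s a * s b + s a + s b + 9) * (s a + s b + 9) := Nat.mul_le_mul (by omega) (by omega)
        · -- size b₁ ≤ size a₁ : bound size b, apply stepB on (b,a)
          have h2 : a₁ + b₁ < 2^(Nat.size a₁ + 1) := by
            have g1 : a₁ < 2^(Nat.size a₁) := Nat.lt_size_self a₁
            have g2 : b₁ < 2^(Nat.size b₁) := Nat.lt_size_self b₁
            have g3 : (2:ℕ)^(Nat.size b₁) ≤ 2^(Nat.size a₁) :=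
              Nat.pow_le_pow_right (by norm_num) hle
            have g4 : (2:ℕ)^(Nat.size a₁ + 1) = 2^(Nat.size a₁)*2 := pow_succ 2 _
            omega
          have hαle : γ < Nat.size a₁ + 1 := by
            have g5 : (2:ℕ)^γ ≤ 2^γ * c := Nat.le_mul_of_pos_right _ hcpos
            have g6 : (2:ℕ)^γ < 2^(Nat.size a₁ + 1) := by omega
            exact (Nat.pow_lt_pow_iff_right (by norm_num)).mp g6
          have hc_lt : c < 2^(Nat.size a₁ + 1 - γ) := by
            have g7 : (2:ℕ)^(Nat.size a₁ + 1) = 2^γ * 2^(Nat.size a₁ + 1 - γ) := by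
              rw [← pow_add]
              congr 1
              omega
            have g8 : 2^γ * c < 2^γ * 2^(Nat.size a₁ + 1 - γ) := by omega
            exact Nat.lt_of_mul_lt_mul_left g8
          have hPc : Nat.size c ≤ Nat.size a₁ + 1 - γ := Nat.size_le.mpr hc_lt
          have hPbK : Nat.size b ≤ s a * s b + s a + s b := by omega
          have hstep := stepB b a i j ⟨wB, hwB⟩ hb3 hj hji (by rw [mul_comm]; exact heq)
          calc i ≤ Nat.size b * (s a + 2) := hstep
            _ ≤ (s a * s b + s a + s b) * (s a + 2) := Nat.mul_le_mul_right _ hPbK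
            _ ≤ (s a * s b + s a + s b + 9) * (s a + s b + 9) := Nat.mul_le_mul (by omega) (by omega)
    · -- 2b : γ > α
      obtain ⟨e, he1, hγαe⟩ : ∃ e, 0 < e ∧ γ = α + e := ⟨γ - α, by omega, by omega⟩
      have E1 : 2^(α+α)*(2^e*c + a₁*b₁) = 2^j*(1+2^d) := by
        have e1 : 2^α*(a₁+b₁) + 2^(α+α)*(a₁*b₁) = 2^(α+α)*(2^e*c + a₁*b₁) := by
          rw [hγe, hγαe]; ring
        omega
      have hGodd : (2^e*c + a₁*b₁) % 2 = 1 := by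
        obtain ⟨e', he'⟩ : ∃ e', e = e'+1 := ⟨e-1, by omega⟩
        have e3 : 2^e*c + a₁*b₁ = 2*(2^e'*c + wp) + 1 := by
          rw [hwp, he']; ring
        omega
      have hHodd : (1 + 2^d) % 2 = 1 := by
        obtain ⟨d', hd'⟩ : ∃ d', d = d'+1 := ⟨d-1, by omega⟩
        have e4 : (1:ℕ) + 2^d = 2*(2^d') + 1 := by rw [hd']; ring
        omega
      obtain ⟨hjeq, hG⟩ := match2 (α+α) j _ _ hGodd hHodd E1
      have hWpos : 0 < 2^e*c := by positivity
      have hQ := s_Q d (a₁*b₁ - 1) (2^e*c - 1) (by omega)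
      have hpab : s (a₁*b₁) = s (a₁*b₁ - 1) + 1 := s_pred _ ⟨wp, hwp⟩
      have hSB := s_SB e (c - 1)
      rw [show c - 1 + 1 = c by omega] at hSB
      have hpc : s c = s (c-1) + 1 := s_pred c hcodd
      have hieq : i + 2 = 2*α + e + s c + s (a₁*b₁) := by omega
      have hgem := gem α a₁ b₁ hα hab1 hbb1 ⟨2^e*c, by rw [hγe, hγαe]; ring⟩
      rcases le_total (Nat.size a₁) (Nat.size b₁) with hle | hle
      · have h2 : a₁ + b₁ < 2^(Nat.size b₁ + 1) := by
          have g1 : a₁ < 2^(Nat.size a₁) := Nat.lt_size_self a₁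
          have g2 : b₁ < 2^(Nat.size b₁) := Nat.lt_size_self b₁
          have g3 : (2:ℕ)^(Nat.size a₁) ≤ 2^(Nat.size b₁) :=
            Nat.pow_le_pow_right (by norm_num) hle
          have g4 : (2:ℕ)^(Nat.size b₁ + 1) = 2^(Nat.size b₁)*2 := pow_succ 2 _
          omega
        have hγle : γ < Nat.size b₁ + 1 := by
          have g5 : (2:ℕ)^γ ≤ 2^γ * c := Nat.le_mul_of_pos_right _ hcpos
          have g6 : (2:ℕ)^γ < 2^(Nat.size b₁ + 1) := by omega
          exact (Nat.pow_lt_pow_iff_right (by norm_num)).mp g6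
        have hPaK : Nat.size a ≤ s a * s b + s a + s b := by omega
        have hstep := stepB a b i j ⟨wA, hwA⟩ ha3 hj hji heq
        calc i ≤ Nat.size a * (s b + 2) := hstep
          _ ≤ (s a * s b + s a + s b) * (s b + 2) := Nat.mul_le_mul_right _ hPaK
          _ ≤ (s a * s b + s a + s b + 9) * (s a + s b + 9) := Nat.mul_le_mul (by omega) (by omega)
      · have h2 : a₁ + b₁ < 2^(Nat.size a₁ + 1) := by
          have g1 : a₁ < 2^(Nat.size a₁) := Nat.lt_size_self a₁
          have g2 : b₁ < 2^(Nat.size b₁) := Nat.lt_size_self b₁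
          have g3 : (2:ℕ)^(Nat.size b₁) ≤ 2^(Nat.size a₁) :=
            Nat.pow_le_pow_right (by norm_num) hle
          have g4 : (2:ℕ)^(Nat.size a₁ + 1) = 2^(Nat.size a₁)*2 := pow_succ 2 _
          omega
        have hγle : γ < Nat.size a₁ + 1 := by
          have g5 : (2:ℕ)^γ ≤ 2^γ * c := Nat.le_mul_of_pos_right _ hcpos
          have g6 : (2:ℕ)^γ < 2^(Nat.size a₁ + 1) := by omega
          exact (Nat.pow_lt_pow_iff_right (by norm_num)).mp g6
        have hPbK : Nat.size b ≤ s a * s b + s a + s b := by omega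
        have hstep := stepB b a i j ⟨wB, hwB⟩ hb3 hj hji (by rw [mul_comm]; exact heq)
        calc i ≤ Nat.size b * (s a + 2) := hstep
          _ ≤ (s a * s b + s a + s b) * (s a + 2) := Nat.mul_le_mul_right _ hPbK
          _ ≤ (s a * s b + s a + s b + 9) * (s a + s b + 9) := Nat.mul_le_mul (by omega) (by omega)
  · -- β < α : asymmetric case, swapped
    have h := caseLT b a i j β α b₁ a₁ ⟨wB, hwB⟩ ⟨wA, hwA⟩ hsb2 hsa2 hj hji
      (by rw [mul_comm]; exact heq) hβ hbb1 hab1 hB hA hgt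
    have hcomm : s b * s a = s a * s b := Nat.mul_comm _ _
    calc i ≤ (s b * s a) * (s a + 2) := h
      _ ≤ (s a * s b + s a + s b + 9) * (s a + s b + 9) := by
        rw [hcomm]
        exact Nat.mul_le_mul (by omega) (by omega)

theorem finitely_many_solutions_k3 (ℓ m : ℕ) (hℓ : 2 ≤ ℓ) (hm : 2 ≤ m)
    (hmax : 3 ≤ max ℓ m) :
    {p : ℕ × ℕ | 0 < p.1 ∧ 0 < p.2 ∧ Odd p.1 ∧ Odd p.2 ∧
      s p.1 = ℓ ∧ s p.2 = m ∧ s (p.1 * p.2) = 3}.Finite := by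
  set C := 2^((ℓ*m + ℓ + m + 9) * (ℓ + m + 9) + 2) with hC
  apply Set.Finite.subset ((Set.finite_Iic C).prod (Set.finite_Iic C))
  rintro ⟨a, b⟩ ⟨hp1, hp2, ho1, ho2, hs1, hs2, hs3⟩
  simp only [Set.mem_prod, Set.mem_Iic]
  have hs1' : s a = ℓ := hs1
  have hs2' : s b = m := hs2
  have hp1' : (0:ℕ) < a := hp1
  have hp2' : (0:ℕ) < b := hp2
  obtain ⟨i, j, hj, hji, hrep⟩ := three_rep _ (Odd.mul ho1 ho2) hs3
  have hcore := core a b i j ho1 ho2 (by omega) (by omega)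
    (by rw [hs1', hs2']; omega) hj hji hrep
  rw [hs1', hs2'] at hcore
  have hab : a * b ≤ C := by
    have h1 : (2:ℕ)^j ≤ 2^i := Nat.pow_le_pow_right (by norm_num) (by omega)
    have h2 : (1:ℕ) ≤ 2^i := Nat.one_le_two_pow
    have h3 : a * b ≤ 2^(i+2) := by
      rw [hrep]
      have h4 : (2:ℕ)^(i+2) = 2^i * 4 := by rw [pow_add]; norm_num
      omega
    have h5 : (2:ℕ)^(i+2) ≤ C := by
      rw [hC]
      exact Nat.pow_le_pow_right (by norm_num) (by omega)
    omega
  constructor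
  · exact le_trans (Nat.le_mul_of_pos_right a hp2) hab
  · exact le_trans (Nat.le_mul_of_pos_left b hp1) hab
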